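/- The PCP reduction is correct in the other direction: if a sequence σ = σ₁σ₂σ₃σ₄ with σ₁ ∈ (Σ_{a∈A} M^!_a)⁺, σ₂ ∈ (Σ_{a∈A} M^f_a)⁺, σ₃ ∈ (Σ_{a∈A} M^g_a)⁺, σ₄ ∈ (Σ_{b∈B} M^?_b)⁺ composes to a complete MSC, then the word u read off from σ₁ satisfies: σ₂ reads the same word u, σ₃ reads u, σ₄ reads a word v ∈ B⁺ with v = f(u) = g(u); hence u is a solution of the PCP instance (f, g). -/

import Mathlib

/-! Core definitions: compositional message sequence charts (cMSCs),
concatenation, infinite products, completeness and connectedness. -/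

namespace HMSCPaper

/-- Communication actions: `send p q` is `p!q`, `recv p q` is `p?q`
(process `p` receives from `q`). -/
inductive Act (P : Type) where
  | send : P → P → Act P
  | recv : P → P → Act P

/-- The process executing an action. -/
def Act.proc {P : Type} : Act P → P
  | .send p _ => p
  | .recv p _ => p

/-- A compositional MSC over processes `P` and messages `Msg`:
a partially ordered set of events labeled by actions, with a message-matching
relation `tri` (◁) satisfying FIFO per channel, the order being generated by
process successors and message edges, unmatched events carrying a message of `Msg`. -/
structure CMSC (P Msg : Type) where
  E : Type
  le : E → E → Prop
  tri : E → E → Prop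
  lab : E → Act P
  msg : E → Option Msg
  nonempty : Nonempty E
  le_refl : ∀ e, le e e
  le_trans : ∀ {a b c}, le a b → le b c → le a c
  le_antisymm : ∀ {a b}, le a b → le b a → a = b
  /-- events of the same process are totally ordered -/
  proc_total : ∀ e f, (lab e).proc = (lab f).proc → le e f ∨ le f e
  /-- every event has finitely many predecessors on its own process
  (per-process order type finite or ω) -/
  proc_wf : ∀ e, Finite {f : E // (lab f).proc = (lab e).proc ∧ le f e}
  tri_le : ∀ {e f}, tri e f → le e f
  /-- matched pairs are send/receive pairs on a channel -/
  tri_lab : ∀ {e f}, tri e f → ∃ p q, lab e = Act.send p q ∧ lab f = Act.recv q p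
  /-- FIFO policy per channel -/
  fifo : ∀ {e e' f f' p q}, tri e f → tri e' f' →
    lab e = Act.send p q → lab e' = Act.send p q → (le e e' ↔ le f f')
  /-- exactly the unmatched events carry a message label -/
  msg_dom : ∀ e, (msg e ≠ none) ↔ ((∀ f, ¬ tri e f) ∧ (∀ f, ¬ tri f e))
  /-- the partial order is the reflexive transitive closure of
  process successor and message edges -/
  le_gen : ∀ e f, le e f ↔ Relation.ReflTransGen
    (fun a b => tri a b ∨ ((lab a).proc = (lab b).proc ∧ le a b ∧ a ≠ b ∧
      ∀ c, (lab c).proc = (lab a).proc → le a c → le c b → c = a ∨ c = b)) e f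
  /-- unmatched events with the same action label as a matched pair occur after
  the matched send / before the matched receive -/
  unm_late : ∀ {e f} (g : E), tri e f →
    ((∀ h, ¬ tri g h) ∧ (∀ h, ¬ tri h g)) →
    ((lab g = lab e → le e g ∧ e ≠ g) ∧ (lab g = lab f → le g f ∧ g ≠ f))

/-- An event is unmatched if it is related to no event by ◁. -/
def CMSC.Unmatched {P Msg : Type} (M : CMSC P Msg) (e : M.E) : Prop :=
  (∀ f, ¬ M.tri e f) ∧ (∀ f, ¬ M.tri f e)

/-- A (complete) MSC: no unmatched events. -/
def CMSC.Complete {P Msg : Type} (M : CMSC P Msg) : Prop :=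
  ∀ e, ¬ M.Unmatched e

/-- A cMSC is connected if the undirected graph on events
with edges `≤ ∪ ≤⁻¹` is connected. -/
def CMSC.Connected {P Msg : Type} (M : CMSC P Msg) : Prop :=
  ∀ x y : M.E, Relation.ReflTransGen (fun a b => M.le a b ∨ M.le b a) x y

/-- Witness that `M` belongs to the concatenation `M₁ ∘ M₂`: `M` is the vertical
stacking of `M₁` above `M₂`, with per-process order `E¹_p × E²_p` added, and
possibly new message edges matching unmatched sends of `M₁` with unmatched
receives of `M₂` carrying the same message. -/
structure IsConcat {P Msg : Type} (M₁ M₂ M : CMSC P Msg) where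
  eqv : M.E ≃ (M₁.E ⊕ M₂.E)
  lab_eq : ∀ e, M.lab e = Sum.elim M₁.lab M₂.lab (eqv e)
  le_left : ∀ a b : M₁.E, (M₁.lab a).proc = (M₁.lab b).proc →
    (M.le (eqv.symm (.inl a)) (eqv.symm (.inl b)) ↔ M₁.le a b)
  le_right : ∀ a b : M₂.E, (M₂.lab a).proc = (M₂.lab b).proc →
    (M.le (eqv.symm (.inr a)) (eqv.symm (.inr b)) ↔ M₂.le a b)
  le_cross : ∀ (a : M₁.E) (b : M₂.E), (M₁.lab a).proc = (M₂.lab b).proc →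
    M.le (eqv.symm (.inl a)) (eqv.symm (.inr b))
  tri_left : ∀ a b : M₁.E,
    (M.tri (eqv.symm (.inl a)) (eqv.symm (.inl b)) ↔ M₁.tri a b)
  tri_right : ∀ a b : M₂.E,
    (M.tri (eqv.symm (.inr a)) (eqv.symm (.inr b)) ↔ M₂.tri a b)
  tri_cross : ∀ (a : M₁.E) (b : M₂.E),
    M.tri (eqv.symm (.inl a)) (eqv.symm (.inr b)) →
    M₁.msg a = M₂.msg b ∧ M₁.msg a ≠ none
  tri_back : ∀ (a : M₂.E) (b : M₁.E), ¬ M.tri (eqv.symm (.inr a)) (eqv.symm (.inl b))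
  msg_eq : ∀ e, M.Unmatched e → M.msg e = Sum.elim M₁.msg M₂.msg (eqv e)

/-- `M ∈ M₁ ∘ M₂`. -/
def ConcatMem {P Msg : Type} (M₁ M₂ M : CMSC P Msg) : Prop :=
  Nonempty (IsConcat M₁ M₂ M)

/-- `M` is a composition of the nonempty list `l` of cMSCs (left to right). -/
def ConcatChain {P Msg : Type} : List (CMSC P Msg) → CMSC P Msg → Prop
  | [], _ => False
  | [N], M => M = N
  | N :: N' :: l, M => ∃ M', ConcatChain (N' :: l) M' ∧ ConcatMem N M' M

end HMSCPaper

namespace HMSCPaper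

/-- The three processes of the PCP reduction. -/
inductive PCPProc where
  | p | q | r
deriving DecidableEq

/-- `M^!_a`: two unmatched sends on process `p`: `p!q` then `p!r`, both with message `a`. -/
def IsMBang {A B : Type} (a : A) (M : CMSC PCPProc (A ⊕ B)) : Prop :=
  ∃ e f : M.E, e ≠ f ∧ (∀ x, x = e ∨ x = f) ∧ M.le e f ∧
    M.lab e = .send .p .q ∧ M.lab f = .send .p .r ∧
    M.msg e = some (.inl a) ∧ M.msg f = some (.inl a) ∧
    ∀ x y, ¬ M.tri x y

/-- `M^f_a`: on process `q`, one unmatched receive `q?p` with message `a`,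
followed by unmatched sends `q!p` carrying the letters of `f a` in order. -/
def IsMf {A B : Type} (f : A → List B) (a : A) (M : CMSC PCPProc (A ⊕ B)) : Prop :=
  ∃ ev : Fin ((f a).length + 1) ≃ M.E,
    (∀ i j, M.le (ev i) (ev j) ↔ i ≤ j) ∧
    M.lab (ev 0) = .recv .q .p ∧ M.msg (ev 0) = some (.inl a) ∧
    (∀ i : Fin (f a).length,
      M.lab (ev i.succ) = .send .q .p ∧ M.msg (ev i.succ) = some (.inr ((f a).get i))) ∧
    ∀ x y, ¬ M.tri x y

/-- `M^g_a`: analogous to `M^f_a` on process `r` with morphism `g`. -/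
def IsMg {A B : Type} (g : A → List B) (a : A) (M : CMSC PCPProc (A ⊕ B)) : Prop :=
  ∃ ev : Fin ((g a).length + 1) ≃ M.E,
    (∀ i j, M.le (ev i) (ev j) ↔ i ≤ j) ∧
    M.lab (ev 0) = .recv .r .p ∧ M.msg (ev 0) = some (.inl a) ∧
    (∀ i : Fin (g a).length,
      M.lab (ev i.succ) = .send .r .p ∧ M.msg (ev i.succ) = some (.inr ((g a).get i))) ∧
    ∀ x y, ¬ M.tri x y

/-- `M^?_b`: two unmatched receives on process `p`: `p?q` then `p?r`, both with message `b`. -/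
def IsMQuery {A B : Type} (b : B) (M : CMSC PCPProc (A ⊕ B)) : Prop :=
  ∃ e f : M.E, e ≠ f ∧ (∀ x, x = e ∨ x = f) ∧ M.le e f ∧
    M.lab e = .recv .p .q ∧ M.lab f = .recv .p .r ∧
    M.msg e = some (.inr b) ∧ M.msg f = some (.inr b) ∧
    ∀ x y, ¬ M.tri x y

/-- Isomorphism of cMSCs. -/
def CMSCIso {P Msg : Type} (M M' : CMSC P Msg) : Prop :=
  ∃ e : M.E ≃ M'.E,
    (∀ a b, M.le a b ↔ M'.le (e a) (e b)) ∧
    (∀ a b, M.tri a b ↔ M'.tri (e a) (e b)) ∧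
    (∀ a, M'.lab (e a) = M.lab a) ∧ (∀ a, M'.msg (e a) = M.msg a)

end HMSCPaper

namespace HMSCPaper

variable {P Msg : Type}

/-- Summary of a concatenation chain: how block events embed into `M`. -/
structure ChainFacts (L : List (CMSC P Msg)) (M : CMSC P Msg) where
  emb : ∀ (i : ℕ) (N : CMSC P Msg), L[i]? = some N → N.E → M.E
  lab : ∀ i N hN a, M.lab (emb i N hN a) = N.lab a
  le_same : ∀ i N hN a b, (N.lab a).proc = (N.lab b).proc →
    (M.le (emb i N hN a) (emb i N hN b) ↔ N.le a b)
  le_cross : ∀ i N hN a j N' hN' b, i < j → (N.lab a).proc = (N'.lab b).proc →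
    M.le (emb i N hN a) (emb j N' hN' b)
  tri_same : ∀ i N hN a b, M.tri (emb i N hN a) (emb i N hN b) ↔ N.tri a b
  tri_ge : ∀ i N hN a j N' hN' b, M.tri (emb i N hN a) (emb j N' hN' b) → i ≤ j
  tri_msg : ∀ i N hN a j N' hN' b, i < j → M.tri (emb i N hN a) (emb j N' hN' b) →
    N.msg a = N'.msg b
  inj_idx : ∀ i N hN a j N' hN' b, emb i N hN a = emb j N' hN' b → i = j
  inj_ev : ∀ i N hN a b, emb i N hN a = emb i N hN b → a = b
  surj : ∀ e : M.E, ∃ i N hN a, e = emb i N hN a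
  msg_unm : ∀ i N hN a, M.Unmatched (emb i N hN a) →
    M.msg (emb i N hN a) = N.msg a

private lemma cg0 {α : Type _} {N N₀ : α} {L' : List α} (h : (N :: L')[0]? = some N₀) :
    N₀ = N := by
  simp at h; exact h.symm
private lemma cgs {α : Type _} {N N₀ : α} {L' : List α} {j : ℕ}
    (h : (N :: L')[j+1]? = some N₀) : L'[j]? = some N₀ := by simpa using h

private lemma single_get {N N' : CMSC P Msg} {i : ℕ} (h : ([N] : List (CMSC P Msg))[i]? = some N') :
    N' = N ∧ i = 0 := by
  cases i with
  | zero => simp at h; exact ⟨h.symm, rfl⟩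
  | succ n => simp at h

theorem chainFacts_nonempty :
    ∀ (L : List (CMSC P Msg)) (M : CMSC P Msg), ConcatChain L M → Nonempty (ChainFacts L M) := by
  intro L
  induction L with
  | nil => intro M h; exact absurd h (by simp [ConcatChain])
  | cons N L ih =>
    intro M h
    cases L with
    | nil =>
      have hMN : M = N := h
      subst hMN
      refine ⟨{
        emb := fun i N' hN' a => (single_get hN').1 ▸ a
        lab := ?_, le_same := ?_, le_cross := ?_, tri_same := ?_, tri_ge := ?_
        tri_msg := ?_, inj_idx := ?_, inj_ev := ?_, surj := ?_, msg_unm := ?_ }⟩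
      · intro i N' hN' a
        obtain ⟨h1, h2⟩ := single_get hN'; subst h1; rfl
      · intro i N' hN' a b _
        obtain ⟨h1, h2⟩ := single_get hN'; subst h1; rfl
      · intro i N' hN' a j N'' hN'' b hij _
        obtain ⟨h1, h2⟩ := single_get hN'; obtain ⟨h1', h2'⟩ := single_get hN''; omega
      · intro i N' hN' a b
        obtain ⟨h1, h2⟩ := single_get hN'; subst h1; rfl
      · intro i N' hN' a j N'' hN'' b _
        obtain ⟨h1, h2⟩ := single_get hN'; obtain ⟨h1', h2'⟩ := single_get hN''; omega
      · intro i N' hN' a j N'' hN'' b hij _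
        obtain ⟨h1, h2⟩ := single_get hN'; obtain ⟨h1', h2'⟩ := single_get hN''; omega
      · intro i N' hN' a j N'' hN'' b _
        obtain ⟨h1, h2⟩ := single_get hN'; obtain ⟨h1', h2'⟩ := single_get hN''; omega
      · intro i N' hN' a b
        obtain ⟨h1, h2⟩ := single_get hN'; subst h1; exact id
      · intro e; exact ⟨0, M, by simp, e, rfl⟩
      · intro i N' hN' a _
        obtain ⟨h1, h2⟩ := single_get hN'; subst h1; rfl
    | cons N' l =>
      obtain ⟨M', hM', hmem⟩ := h
      obtain ⟨F⟩ := ih M' hM'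
      obtain ⟨C⟩ := hmem
      refine ⟨{
        emb := fun i N₀ h a =>
          match i, h with
          | 0, h => C.eqv.symm (.inl (cg0 h ▸ a))
          | (j+1), h => C.eqv.symm (.inr (F.emb j N₀ (cgs h) a))
        lab := ?_, le_same := ?_, le_cross := ?_, tri_same := ?_, tri_ge := ?_
        tri_msg := ?_, inj_idx := ?_, inj_ev := ?_, surj := ?_, msg_unm := ?_ }⟩
      · intro i N₀ hN a
        cases i with
        | zero =>
          obtain rfl := cg0 hN
          simp [C.lab_eq]
        | succ j =>
          simp [C.lab_eq, F.lab]
      · intro i N₀ hN a b hproc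
        cases i with
        | zero =>
          obtain rfl := cg0 hN
          exact C.le_left a b hproc
        | succ j =>
          have := C.le_right (F.emb j N₀ (cgs hN) a) (F.emb j N₀ (cgs hN) b)
            (by rw [F.lab, F.lab]; exact hproc)
          exact this.trans (F.le_same j N₀ (cgs hN) a b hproc)
      · intro i N₀ hN a j N₁ hN₁ b hij hproc
        cases i with
        | zero =>
          obtain rfl := cg0 hN
          cases j with
          | zero => omega
          | succ j' =>
            exact C.le_cross _ _ (by rw [F.lab]; exact hproc)
        | succ i' =>
          cases j with
          | zero => omega
          | succ j' =>
            refine (C.le_right _ _ (by rw [F.lab, F.lab]; exact hproc)).mpr ?_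
            exact F.le_cross i' N₀ (cgs hN) a j' N₁ (cgs hN₁) b (by omega) hproc
      · intro i N₀ hN a b
        cases i with
        | zero =>
          obtain rfl := cg0 hN
          exact C.tri_left a b
        | succ j =>
          exact (C.tri_right _ _).trans (F.tri_same j N₀ (cgs hN) a b)
      · intro i N₀ hN a j N₁ hN₁ b htri
        cases i with
        | zero => omega
        | succ i' =>
          cases j with
          | zero => exact absurd htri (C.tri_back _ _)
          | succ j' =>
            have := (C.tri_right _ _).mp htri
            have := F.tri_ge i' N₀ (cgs hN) a j' N₁ (cgs hN₁) b this
            omega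
      · intro i N₀ hN a j N₁ hN₁ b hij htri
        cases i with
        | zero =>
          obtain rfl := cg0 hN
          cases j with
          | zero => omega
          | succ j' =>
            obtain ⟨heq, hne⟩ := C.tri_cross _ _ htri
            have hunm : M'.Unmatched (F.emb j' N₁ (cgs hN₁) b) :=
              (M'.msg_dom _).mp (by rw [← heq]; exact hne)
            rw [heq, F.msg_unm j' N₁ (cgs hN₁) b hunm]
        | succ i' =>
          cases j with
          | zero => omega
          | succ j' =>
            exact F.tri_msg i' N₀ (cgs hN) a j' N₁ (cgs hN₁) b (by omega)
              ((C.tri_right _ _).mp htri)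
      · intro i N₀ hN a j N₁ hN₁ b heq
        cases i with
        | zero =>
          cases j with
          | zero => rfl
          | succ j' => simpa using C.eqv.symm.injective heq
        | succ i' =>
          cases j with
          | zero => simpa using C.eqv.symm.injective heq
          | succ j' =>
            have h2 : (Sum.inr (F.emb i' N₀ (cgs hN) a) : N.E ⊕ M'.E) = .inr (F.emb j' N₁ (cgs hN₁) b) :=
              C.eqv.symm.injective heq
            have h3 := Sum.inr.inj h2
            have := F.inj_idx i' N₀ (cgs hN) a j' N₁ (cgs hN₁) b h3
            omega
      · intro i N₀ hN a b heq
        cases i with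
        | zero =>
          obtain rfl := cg0 hN
          exact Sum.inl.inj (C.eqv.symm.injective heq)
        | succ j =>
          exact F.inj_ev j N₀ (cgs hN) a b (Sum.inr.inj (C.eqv.symm.injective heq))
      · intro e
        rcases hsum : C.eqv e with a | b
        · refine ⟨0, N, by simp, a, ?_⟩
          have : e = C.eqv.symm (.inl a) := by rw [← hsum]; simp
          exact this
        · obtain ⟨j, N₁, h₁, x, hx⟩ := F.surj b
          refine ⟨j+1, N₁, by simpa using h₁, x, ?_⟩
          have : e = C.eqv.symm (.inr b) := by rw [← hsum]; simp
          rw [this, hx]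
      · intro i N₀ hN a hU
        cases i with
        | zero =>
          obtain rfl := cg0 hN
          have := C.msg_eq _ hU
          simpa using this
        | succ j =>
          have h1 := C.msg_eq _ hU
          simp only [Equiv.apply_symm_apply, Sum.elim_inr] at h1
          rw [h1]
          refine F.msg_unm j N₀ (cgs hN) a ⟨fun x hx => ?_, fun x hx => ?_⟩
          · exact hU.1 _ ((C.tri_right _ _).mpr hx)
          · exact hU.2 _ ((C.tri_right _ _).mpr hx)

/-- FIFO matching on one channel: if two strictly ordered lists of annotated events
(the senders being labeled `p!q`) are completely matched to each other by `◁`,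
and `◁` preserves annotations, then the annotation words coincide. -/
lemma channel_words {C : Type} (M : CMSC P Msg) (p q : P) :
    ∀ (S R : List (M.E × C)),
    (∀ s ∈ S, M.lab s.1 = .send p q) →
    (S.map Prod.fst).Pairwise (fun a b => M.le a b ∧ a ≠ b) →
    (R.map Prod.fst).Pairwise (fun a b => M.le a b ∧ a ≠ b) →
    (∀ s ∈ S, ∃ r ∈ R, M.tri s.1 r.1) →
    (∀ r ∈ R, ∃ s ∈ S, M.tri s.1 r.1) →
    (∀ s ∈ S, ∀ r ∈ R, M.tri s.1 r.1 → s.2 = r.2) →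
    S.map Prod.snd = R.map Prod.snd := by
  intro S
  induction S with
  | nil =>
    intro R _ _ _ _ hRm _
    cases R with
    | nil => rfl
    | cons r R' =>
      obtain ⟨s, hs, -⟩ := hRm r List.mem_cons_self
      exact absurd hs List.not_mem_nil
  | cons s₀ S' ih =>
    intro R hSlab hSord hRord hSm hRm htri
    cases R with
    | nil =>
      obtain ⟨r, hr, -⟩ := hSm s₀ List.mem_cons_self
      exact absurd hr List.not_mem_nil
    | cons r₀ R' =>
      have hlab₀ : M.lab s₀.1 = .send p q := hSlab s₀ List.mem_cons_self
      rw [List.map_cons] at hSord hRord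
      have headS : ∀ s ∈ S', M.le s₀.1 s.1 ∧ s₀.1 ≠ s.1 := by
        intro s hs
        exact (List.pairwise_cons.mp hSord).1 s.1 (List.mem_map_of_mem hs)
      have headR : ∀ r ∈ R', M.le r₀.1 r.1 ∧ r₀.1 ≠ r.1 := by
        intro r hr
        exact (List.pairwise_cons.mp hRord).1 r.1 (List.mem_map_of_mem hr)
      -- the heads match each other
      obtain ⟨rj, hrj, htj⟩ := hSm s₀ List.mem_cons_self
      obtain ⟨si, hsi, hti⟩ := hRm r₀ List.mem_cons_self
      have hr0le : M.le r₀.1 rj.1 := by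
        rcases List.mem_cons.mp hrj with h | h
        · rw [h]; exact M.le_refl _
        · exact (headR rj h).1
      have h2 : M.le si.1 s₀.1 := (M.fifo hti htj (hSlab si hsi) hlab₀).mpr hr0le
      have h3 : M.le s₀.1 si.1 := by
        rcases List.mem_cons.mp hsi with h | h
        · rw [h]; exact M.le_refl _
        · exact (headS si h).1
      have tri00 : M.tri s₀.1 r₀.1 := by
        have : si.1 = s₀.1 := M.le_antisymm h2 h3
        rwa [this] at hti
      -- functionality of the matching
      have sendInj : ∀ s ∈ s₀ :: S', M.tri s.1 r₀.1 → s.1 = s₀.1 := by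
        intro s hs ht
        have h4 : M.le s.1 s₀.1 :=
          (M.fifo ht tri00 (hSlab s hs) hlab₀).mpr (M.le_refl _)
        have h5 : M.le s₀.1 s.1 := by
          rcases List.mem_cons.mp hs with h | h
          · rw [h]; exact M.le_refl _
          · exact (headS s h).1
        exact M.le_antisymm h4 h5
      have recvInj : ∀ r ∈ r₀ :: R', M.tri s₀.1 r.1 → r.1 = r₀.1 := by
        intro r hr ht
        have h4 : M.le r.1 r₀.1 :=
          (M.fifo ht tri00 hlab₀ hlab₀).mp (M.le_refl _)
        have h5 : M.le r₀.1 r.1 := by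
          rcases List.mem_cons.mp hr with h | h
          · rw [h]; exact M.le_refl _
          · exact (headR r h).1
        exact M.le_antisymm h4 h5
      have hrec := ih R' (fun s hs => hSlab s (List.mem_cons_of_mem _ hs))
        hSord.of_cons hRord.of_cons
        ?_ ?_ (fun s hs r hr ht =>
          htri s (List.mem_cons_of_mem _ hs) r (List.mem_cons_of_mem _ hr) ht)
      · have hhd : s₀.2 = r₀.2 :=
          htri s₀ List.mem_cons_self r₀ List.mem_cons_self tri00
        simp [hhd, hrec]
      · -- senders of the tail are matched within the tail receivers
        intro s hs
        obtain ⟨r, hr, ht⟩ := hSm s (List.mem_cons_of_mem _ hs)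
        refine ⟨r, ?_, ht⟩
        rcases List.mem_cons.mp hr with h | h
        · exfalso
          have h1 : M.tri s.1 r₀.1 := by rwa [h] at ht
          have := sendInj s (List.mem_cons_of_mem _ hs) h1
          exact (headS s hs).2 this.symm
        · exact h
      · intro r hr
        obtain ⟨s, hs, ht⟩ := hRm r (List.mem_cons_of_mem _ hr)
        refine ⟨s, ?_, ht⟩
        rcases List.mem_cons.mp hs with h | h
        · exfalso
          have h1 : M.tri s₀.1 r.1 := by rwa [h] at ht
          have := recvInj r (List.mem_cons_of_mem _ hr) h1
          exact (headR r hr).2 this.symm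
        · exact h

/-- if `σ = σ₁σ₂σ₃σ₄` with `σ₁ ∈ (Σ_a M^!_a)⁺`, `σ₂ ∈ (Σ_a M^f_a)⁺`,
`σ₃ ∈ (Σ_a M^g_a)⁺`, `σ₄ ∈ (Σ_b M^?_b)⁺` composes to a complete MSC, then the
words read off the four blocks satisfy `u₂ = u₁`, `u₃ = u₁`, and
`v = f(u₁) = g(u₁)`; hence `u₁` is a PCP solution. -/
theorem pcp_complete {A B : Type} (f g : A → List B)
    (hf : ∀ a, f a ≠ []) (hg : ∀ a, g a ≠ [])
    (u₁ u₂ u₃ : List A) (v : List B)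
    (hu₁ : u₁ ≠ []) (hu₂ : u₂ ≠ []) (hu₃ : u₃ ≠ []) (hv : v ≠ [])
    (L₁ L₂ L₃ L₄ : List (CMSC PCPProc (A ⊕ B)))
    (h₁ : List.Forall₂ IsMBang u₁ L₁)
    (h₂ : List.Forall₂ (IsMf f) u₂ L₂)
    (h₃ : List.Forall₂ (IsMg g) u₃ L₃)
    (h₄ : List.Forall₂ IsMQuery v L₄)
    (M : CMSC PCPProc (A ⊕ B))
    (hM : ConcatChain (L₁ ++ L₂ ++ L₃ ++ L₄) M) (hC : M.Complete) :
    u₂ = u₁ ∧ u₃ = u₁ ∧ v = (u₁.map f).flatten ∧ v = (u₁.map g).flatten := by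
  classical
  obtain ⟨len₁, hF₁⟩ := List.forall₂_iff_get.mp h₁
  obtain ⟨len₂, hF₂⟩ := List.forall₂_iff_get.mp h₂
  obtain ⟨len₃, hF₃⟩ := List.forall₂_iff_get.mp h₃
  obtain ⟨len₄, hF₄⟩ := List.forall₂_iff_get.mp h₄
  obtain ⟨ch⟩ := chainFacts_nonempty _ M hM
  have hlt₁ : ∀ k : Fin u₁.length, (k : ℕ) < L₁.length := fun k => len₁ ▸ k.isLt
  have hlt₂ : ∀ k : Fin u₂.length, (k : ℕ) < L₂.length := fun k => len₂ ▸ k.isLt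
  have hlt₃ : ∀ k : Fin u₃.length, (k : ℕ) < L₃.length := fun k => len₃ ▸ k.isLt
  have hlt₄ : ∀ k : Fin v.length, (k : ℕ) < L₄.length := fun k => len₄ ▸ k.isLt
  have H₁ : ∀ k : Fin u₁.length, IsMBang (u₁.get k) (L₁.get ⟨k, hlt₁ k⟩) :=
    fun k => hF₁ k k.isLt (hlt₁ k)
  have H₂ : ∀ k : Fin u₂.length, IsMf f (u₂.get k) (L₂.get ⟨k, hlt₂ k⟩) :=
    fun k => hF₂ k k.isLt (hlt₂ k)
  have H₃ : ∀ k : Fin u₃.length, IsMg g (u₃.get k) (L₃.get ⟨k, hlt₃ k⟩) :=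
    fun k => hF₃ k k.isLt (hlt₃ k)
  have H₄ : ∀ k : Fin v.length, IsMQuery (v.get k) (L₄.get ⟨k, hlt₄ k⟩) :=
    fun k => hF₄ k k.isLt (hlt₄ k)
  choose e₁ f₁ hne₁ hall₁ hle₁ hlabe₁ hlabf₁ hmsge₁ hmsgf₁ hnt₁ using H₁
  choose ev₂ hord₂ hlz₂ hmz₂ hsucc₂ hnt₂ using H₂
  choose ev₃ hord₃ hlz₃ hmz₃ hsucc₃ hnt₃ using H₃
  choose e₄ f₄ hne₄ hall₄ hle₄ hlabe₄ hlabf₄ hmsge₄ hmsgf₄ hnt₄ using H₄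
  -- positions of the blocks inside the big list
  have hidx₁ : ∀ k : Fin u₁.length,
      (L₁ ++ L₂ ++ L₃ ++ L₄)[(k : ℕ)]? = some (L₁.get ⟨k, hlt₁ k⟩) := by
    intro k
    rw [List.getElem?_append_left (by simp only [List.length_append]; have := hlt₁ k; omega),
      List.getElem?_append_left (by simp only [List.length_append]; have := hlt₁ k; omega),
      List.getElem?_append_left (hlt₁ k), List.getElem?_eq_getElem (hlt₁ k),
      List.get_eq_getElem]
  have hidx₂ : ∀ k : Fin u₂.length,
      (L₁ ++ L₂ ++ L₃ ++ L₄)[L₁.length + (k : ℕ)]? = some (L₂.get ⟨k, hlt₂ k⟩) := by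
    intro k
    rw [List.getElem?_append_left (by simp only [List.length_append]; have := hlt₂ k; omega),
      List.getElem?_append_left (by simp only [List.length_append]; have := hlt₂ k; omega),
      List.getElem?_append_right (by omega)]
    have h : L₁.length + (k : ℕ) - L₁.length = (k : ℕ) := by omega
    rw [h, List.getElem?_eq_getElem (hlt₂ k), List.get_eq_getElem]
  have hidx₃ : ∀ k : Fin u₃.length,
      (L₁ ++ L₂ ++ L₃ ++ L₄)[L₁.length + L₂.length + (k : ℕ)]? = some (L₃.get ⟨k, hlt₃ k⟩) := by
    intro k
    rw [List.getElem?_append_left (by simp only [List.length_append]; have := hlt₃ k; omega),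
      List.getElem?_append_right (by simp only [List.length_append]; omega)]
    have h : L₁.length + L₂.length + (k : ℕ) - (L₁ ++ L₂).length = (k : ℕ) := by
      simp only [List.length_append]; omega
    rw [h, List.getElem?_eq_getElem (hlt₃ k), List.get_eq_getElem]
  have hidx₄ : ∀ k : Fin v.length,
      (L₁ ++ L₂ ++ L₃ ++ L₄)[L₁.length + L₂.length + L₃.length + (k : ℕ)]?
        = some (L₄.get ⟨k, hlt₄ k⟩) := by
    intro k
    rw [List.getElem?_append_right (by simp only [List.length_append]; omega)]
    have h : L₁.length + L₂.length + L₃.length + (k : ℕ) - (L₁ ++ L₂ ++ L₃).length = (k : ℕ) := by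
      simp only [List.length_append]; omega
    rw [h, List.getElem?_eq_getElem (hlt₄ k), List.get_eq_getElem]
  -- the eight families of events of M
  set X₁ : Fin u₁.length → M.E :=
    fun k => ch.emb (k : ℕ) (L₁.get ⟨k, hlt₁ k⟩) (hidx₁ k) (e₁ k) with hX₁
  set Y₁ : Fin u₁.length → M.E :=
    fun k => ch.emb (k : ℕ) (L₁.get ⟨k, hlt₁ k⟩) (hidx₁ k) (f₁ k) with hY₁
  set R₂ : Fin u₂.length → M.E :=
    fun k => ch.emb (L₁.length + (k : ℕ)) (L₂.get ⟨k, hlt₂ k⟩) (hidx₂ k) (ev₂ k 0) with hR₂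
  set S₂ : (k : Fin u₂.length) → Fin (f (u₂.get k)).length → M.E :=
    fun k i => ch.emb (L₁.length + (k : ℕ)) (L₂.get ⟨k, hlt₂ k⟩) (hidx₂ k) (ev₂ k i.succ) with hS₂
  set R₃ : Fin u₃.length → M.E :=
    fun k => ch.emb (L₁.length + L₂.length + (k : ℕ)) (L₃.get ⟨k, hlt₃ k⟩) (hidx₃ k) (ev₃ k 0) with hR₃
  set S₃ : (k : Fin u₃.length) → Fin (g (u₃.get k)).length → M.E :=
    fun k i => ch.emb (L₁.length + L₂.length + (k : ℕ)) (L₃.get ⟨k, hlt₃ k⟩) (hidx₃ k)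
      (ev₃ k i.succ) with hS₃
  set E₄ : Fin v.length → M.E :=
    fun k => ch.emb (L₁.length + L₂.length + L₃.length + (k : ℕ)) (L₄.get ⟨k, hlt₄ k⟩)
      (hidx₄ k) (e₄ k) with hE₄
  set F₄ : Fin v.length → M.E :=
    fun k => ch.emb (L₁.length + L₂.length + L₃.length + (k : ℕ)) (L₄.get ⟨k, hlt₄ k⟩)
      (hidx₄ k) (f₄ k) with hF₄
  -- labels
  have labX₁ : ∀ k, M.lab (X₁ k) = .send .p .q := fun k => (ch.lab _ _ _ _).trans (hlabe₁ k)
  have labY₁ : ∀ k, M.lab (Y₁ k) = .send .p .r := fun k => (ch.lab _ _ _ _).trans (hlabf₁ k)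
  have labR₂ : ∀ k, M.lab (R₂ k) = .recv .q .p := fun k => (ch.lab _ _ _ _).trans (hlz₂ k)
  have labS₂ : ∀ k i, M.lab (S₂ k i) = .send .q .p :=
    fun k i => (ch.lab _ _ _ _).trans (hsucc₂ k i).1
  have labR₃ : ∀ k, M.lab (R₃ k) = .recv .r .p := fun k => (ch.lab _ _ _ _).trans (hlz₃ k)
  have labS₃ : ∀ k i, M.lab (S₃ k i) = .send .r .p :=
    fun k i => (ch.lab _ _ _ _).trans (hsucc₃ k i).1
  have labE₄ : ∀ k, M.lab (E₄ k) = .recv .p .q := fun k => (ch.lab _ _ _ _).trans (hlabe₄ k)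
  have labF₄ : ∀ k, M.lab (F₄ k) = .recv .p .r := fun k => (ch.lab _ _ _ _).trans (hlabf₄ k)
  have emb_congr : ∀ (i i' : ℕ) (h : i = i') (N : CMSC PCPProc (A ⊕ B)) hN hN' a,
      ch.emb i N hN a = ch.emb i' N hN' a := by
    intro i i' h N hN hN' a; subst h; rfl
  -- classification of all events of M
  have cls : ∀ x : M.E,
      (∃ k, x = X₁ k) ∨ (∃ k, x = Y₁ k) ∨ (∃ k, x = R₂ k) ∨ (∃ k i, x = S₂ k i) ∨
      (∃ k, x = R₃ k) ∨ (∃ k i, x = S₃ k i) ∨ (∃ k, x = E₄ k) ∨ (∃ k, x = F₄ k) := by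
    intro x
    obtain ⟨j, N', hN', b, rfl⟩ := ch.surj x
    have hjlen : j < L₁.length + L₂.length + L₃.length + L₄.length := by
      have := (List.getElem?_eq_some_iff.mp hN').1
      simp only [List.length_append] at this
      omega
    by_cases hc1 : j < L₁.length
    · have hj' : j = ((⟨j, by omega⟩ : Fin u₁.length) : ℕ) := rfl
      have heq : some N' = some (L₁.get ⟨j, hlt₁ ⟨j, by omega⟩⟩) :=
        hN'.symm.trans (hidx₁ ⟨j, by omega⟩)
      obtain rfl := Option.some.inj heq
      rcases hall₁ ⟨j, by omega⟩ b with rfl | rfl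
      · exact Or.inl ⟨⟨j, by omega⟩, rfl⟩
      · exact Or.inr (Or.inl ⟨⟨j, by omega⟩, rfl⟩)
    · by_cases hc2 : j < L₁.length + L₂.length
      · set k : Fin u₂.length := ⟨j - L₁.length, by omega⟩ with hk
        have hj' : j = L₁.length + (k : ℕ) := by simp [hk]; omega
        have heq : some N' = some (L₂.get ⟨k, hlt₂ k⟩) := by
          rw [← hN', hj']; exact hidx₂ k
        obtain rfl := Option.some.inj heq
        obtain ⟨i, rfl⟩ : ∃ i, b = ev₂ k i := ⟨(ev₂ k).symm b, ((ev₂ k).apply_symm_apply b).symm⟩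
        rcases Fin.eq_zero_or_eq_succ i with rfl | ⟨i', rfl⟩
        · exact Or.inr (Or.inr (Or.inl ⟨k, emb_congr _ _ hj' _ _ _ _⟩))
        · exact Or.inr (Or.inr (Or.inr (Or.inl ⟨k, i', emb_congr _ _ hj' _ _ _ _⟩)))
      · by_cases hc3 : j < L₁.length + L₂.length + L₃.length
        · set k : Fin u₃.length := ⟨j - L₁.length - L₂.length, by omega⟩ with hk
          have hj' : j = L₁.length + L₂.length + (k : ℕ) := by simp [hk]; omega
          have heq : some N' = some (L₃.get ⟨k, hlt₃ k⟩) := by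
            rw [← hN', hj']; exact hidx₃ k
          obtain rfl := Option.some.inj heq
          obtain ⟨i, rfl⟩ : ∃ i, b = ev₃ k i :=
            ⟨(ev₃ k).symm b, ((ev₃ k).apply_symm_apply b).symm⟩
          rcases Fin.eq_zero_or_eq_succ i with rfl | ⟨i', rfl⟩
          · exact Or.inr (Or.inr (Or.inr (Or.inr (Or.inl ⟨k, emb_congr _ _ hj' _ _ _ _⟩))))
          · exact Or.inr (Or.inr (Or.inr (Or.inr (Or.inr (Or.inl
              ⟨k, i', emb_congr _ _ hj' _ _ _ _⟩)))))
        · set k : Fin v.length := ⟨j - L₁.length - L₂.length - L₃.length, by omega⟩ with hk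
          have hj' : j = L₁.length + L₂.length + L₃.length + (k : ℕ) := by simp [hk]; omega
          have heq : some N' = some (L₄.get ⟨k, hlt₄ k⟩) := by
            rw [← hN', hj']; exact hidx₄ k
          obtain rfl := Option.some.inj heq
          rcases hall₄ k b with rfl | rfl
          · exact Or.inr (Or.inr (Or.inr (Or.inr (Or.inr (Or.inr (Or.inl
              ⟨k, emb_congr _ _ hj' _ _ _ _⟩))))))
          · exact Or.inr (Or.inr (Or.inr (Or.inr (Or.inr (Or.inr (Or.inr
              ⟨k, emb_congr _ _ hj' _ _ _ _⟩))))))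
  -- completeness: every send is matched forward, every receive backward
  have matchFwd : ∀ (x : M.E) (pp qq : PCPProc), M.lab x = Act.send pp qq →
      ∃ y, M.tri x y ∧ M.lab y = Act.recv qq pp := by
    intro x pp qq hlab
    have h2 : ¬ M.Unmatched x := hC x
    rcases Classical.em (∃ y, M.tri x y) with ⟨y, hy⟩ | hno
    · obtain ⟨p', q', hx', hy'⟩ := M.tri_lab hy
      rw [hlab] at hx'
      injection hx' with ha hb
      subst ha; subst hb
      exact ⟨y, hy, hy'⟩
    · exfalso
      apply h2
      constructor
      · intro y hy; exact hno ⟨y, hy⟩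
      · intro y hy
        obtain ⟨p', q', h1', h2'⟩ := M.tri_lab hy
        exact nomatch (hlab.symm.trans h2')
  have matchBwd : ∀ (y : M.E) (pp qq : PCPProc), M.lab y = Act.recv pp qq →
      ∃ x, M.tri x y ∧ M.lab x = Act.send qq pp := by
    intro y pp qq hlab
    have h2 : ¬ M.Unmatched y := hC y
    rcases Classical.em (∃ x, M.tri x y) with ⟨x, hx⟩ | hno
    · obtain ⟨p', q', hx', hy'⟩ := M.tri_lab hx
      rw [hlab] at hy'
      injection hy' with ha hb
      subst ha; subst hb
      exact ⟨x, hx, hx'⟩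
    · exfalso
      apply h2
      constructor
      · intro z hz
        obtain ⟨p', q', h1', h2'⟩ := M.tri_lab hz
        exact nomatch (hlab.symm.trans h1')
      · intro z hz; exact hno ⟨z, hz⟩
  -- channel p → q : u₂ = u₁
  have key1 : u₂ = u₁ := by
    set S1 : List (M.E × Option (A ⊕ B)) :=
      (List.finRange u₁.length).map
        (fun k => (X₁ k, some (Sum.inl (u₁.get k)))) with hS1
    set R1 : List (M.E × Option (A ⊕ B)) :=
      (List.finRange u₂.length).map
        (fun k => (R₂ k, some (Sum.inl (u₂.get k)))) with hR1
    have hw := channel_words M PCPProc.p PCPProc.q S1 R1 ?_ ?_ ?_ ?_ ?_ ?_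
    case _ =>
      rw [hS1, hR1, List.map_map, List.map_map] at hw
      have e1 : (List.finRange u₁.length).map
          (Prod.snd ∘ fun k => (X₁ k, (some (Sum.inl (u₁.get k)) : Option (A ⊕ B))))
          = u₁.map (fun a => some (Sum.inl a)) := by
        conv_rhs => rw [← List.map_get_finRange u₁, List.map_map]
        rfl
      have e2 : (List.finRange u₂.length).map
          (Prod.snd ∘ fun k => (R₂ k, (some (Sum.inl (u₂.get k)) : Option (A ⊕ B))))
          = u₂.map (fun a => some (Sum.inl a)) := by
        conv_rhs => rw [← List.map_get_finRange u₂, List.map_map]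
        rfl
      rw [e1, e2] at hw
      have hinj : Function.Injective (fun a : A => (some (Sum.inl a) : Option (A ⊕ B))) := by
        intro a b h; simpa using h
      exact (List.map_injective_iff.mpr hinj hw).symm
    case _ =>
      intro s hs
      rw [hS1] at hs
      obtain ⟨k, -, rfl⟩ := List.mem_map.mp hs
      exact labX₁ k
    case _ =>
      rw [hS1, List.map_map, List.pairwise_map]
      refine (List.pairwise_lt_finRange _).imp ?_
      intro k k' hkk
      have hklt : (k : ℕ) < (k' : ℕ) := hkk
      refine ⟨ch.le_cross _ _ _ _ _ _ _ _ hklt (by rw [hlabe₁ k, hlabe₁ k']), ?_⟩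
      intro heq
      have := ch.inj_idx _ _ _ _ _ _ _ _ heq
      omega
    case _ =>
      rw [hR1, List.map_map, List.pairwise_map]
      refine (List.pairwise_lt_finRange _).imp ?_
      intro k k' hkk
      have hklt : (k : ℕ) < (k' : ℕ) := hkk
      refine ⟨ch.le_cross _ _ _ _ _ _ _ _ (by omega) (by rw [hlz₂ k, hlz₂ k']), ?_⟩
      intro heq
      have := ch.inj_idx _ _ _ _ _ _ _ _ heq
      omega
    case _ =>
      intro s hs
      rw [hS1] at hs
      obtain ⟨k, -, rfl⟩ := List.mem_map.mp hs
      obtain ⟨y, hty, hylab⟩ := matchFwd (X₁ k) _ _ (labX₁ k)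
      rcases cls y with ⟨k', rfl⟩ | ⟨k', rfl⟩ | ⟨k', rfl⟩ | ⟨k', i', rfl⟩ |
        ⟨k', rfl⟩ | ⟨k', i', rfl⟩ | ⟨k', rfl⟩ | ⟨k', rfl⟩
      · exact absurd ((labX₁ k').symm.trans hylab) (by simp)
      · exact absurd ((labY₁ k').symm.trans hylab) (by simp)
      · refine ⟨(R₂ k', some (Sum.inl (u₂.get k'))), ?_, hty⟩
        rw [hR1]
        exact List.mem_map.mpr ⟨k', List.mem_finRange _, rfl⟩
      · exact absurd ((labS₂ k' i').symm.trans hylab) (by simp)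
      · exact absurd ((labR₃ k').symm.trans hylab) (by simp)
      · exact absurd ((labS₃ k' i').symm.trans hylab) (by simp)
      · exact absurd ((labE₄ k').symm.trans hylab) (by simp)
      · exact absurd ((labF₄ k').symm.trans hylab) (by simp)
    case _ =>
      intro r hr
      rw [hR1] at hr
      obtain ⟨k, -, rfl⟩ := List.mem_map.mp hr
      obtain ⟨x, htx, hxlab⟩ := matchBwd (R₂ k) _ _ (labR₂ k)
      rcases cls x with ⟨k', rfl⟩ | ⟨k', rfl⟩ | ⟨k', rfl⟩ | ⟨k', i', rfl⟩ |
        ⟨k', rfl⟩ | ⟨k', i', rfl⟩ | ⟨k', rfl⟩ | ⟨k', rfl⟩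
      · refine ⟨(X₁ k', some (Sum.inl (u₁.get k'))), ?_, htx⟩
        rw [hS1]
        exact List.mem_map.mpr ⟨k', List.mem_finRange _, rfl⟩
      · exact absurd ((labY₁ k').symm.trans hxlab) (by simp)
      · exact absurd ((labR₂ k').symm.trans hxlab) (by simp)
      · exact absurd ((labS₂ k' i').symm.trans hxlab) (by simp)
      · exact absurd ((labR₃ k').symm.trans hxlab) (by simp)
      · exact absurd ((labS₃ k' i').symm.trans hxlab) (by simp)
      · exact absurd ((labE₄ k').symm.trans hxlab) (by simp)
      · exact absurd ((labF₄ k').symm.trans hxlab) (by simp)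
    case _ =>
      intro s hs r hr htr
      rw [hS1] at hs; rw [hR1] at hr
      obtain ⟨k, -, rfl⟩ := List.mem_map.mp hs
      obtain ⟨k', -, rfl⟩ := List.mem_map.mp hr
      have hm := ch.tri_msg (k : ℕ) (L₁.get ⟨k, hlt₁ k⟩) (hidx₁ k) (e₁ k)
        (L₁.length + (k' : ℕ)) (L₂.get ⟨k', hlt₂ k'⟩) (hidx₂ k') (ev₂ k' 0)
        (by have := k.isLt; omega) htr
      rw [hmsge₁ k, hmz₂ k'] at hm
      exact hm
  -- channel p → r : u₃ = u₁
  have key2 : u₃ = u₁ := by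
    set S1 : List (M.E × Option (A ⊕ B)) :=
      (List.finRange u₁.length).map
        (fun k => (Y₁ k, some (Sum.inl (u₁.get k)))) with hS1
    set R1 : List (M.E × Option (A ⊕ B)) :=
      (List.finRange u₃.length).map
        (fun k => (R₃ k, some (Sum.inl (u₃.get k)))) with hR1
    have hw := channel_words M PCPProc.p PCPProc.r S1 R1 ?_ ?_ ?_ ?_ ?_ ?_
    case _ =>
      rw [hS1, hR1, List.map_map, List.map_map] at hw
      have e1 : (List.finRange u₁.length).map
          (Prod.snd ∘ fun k => (Y₁ k, (some (Sum.inl (u₁.get k)) : Option (A ⊕ B))))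
          = u₁.map (fun a => some (Sum.inl a)) := by
        conv_rhs => rw [← List.map_get_finRange u₁, List.map_map]
        rfl
      have e2 : (List.finRange u₃.length).map
          (Prod.snd ∘ fun k => (R₃ k, (some (Sum.inl (u₃.get k)) : Option (A ⊕ B))))
          = u₃.map (fun a => some (Sum.inl a)) := by
        conv_rhs => rw [← List.map_get_finRange u₃, List.map_map]
        rfl
      rw [e1, e2] at hw
      have hinj : Function.Injective (fun a : A => (some (Sum.inl a) : Option (A ⊕ B))) := by
        intro a b h; simpa using h
      exact (List.map_injective_iff.mpr hinj hw).symm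
    case _ =>
      intro s hs
      rw [hS1] at hs
      obtain ⟨k, -, rfl⟩ := List.mem_map.mp hs
      exact labY₁ k
    case _ =>
      rw [hS1, List.map_map, List.pairwise_map]
      refine (List.pairwise_lt_finRange _).imp ?_
      intro k k' hkk
      have hklt : (k : ℕ) < (k' : ℕ) := hkk
      refine ⟨ch.le_cross _ _ _ _ _ _ _ _ hklt (by rw [hlabf₁ k, hlabf₁ k']), ?_⟩
      intro heq
      have := ch.inj_idx _ _ _ _ _ _ _ _ heq
      omega
    case _ =>
      rw [hR1, List.map_map, List.pairwise_map]
      refine (List.pairwise_lt_finRange _).imp ?_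
      intro k k' hkk
      have hklt : (k : ℕ) < (k' : ℕ) := hkk
      refine ⟨ch.le_cross _ _ _ _ _ _ _ _ (by omega) (by rw [hlz₃ k, hlz₃ k']), ?_⟩
      intro heq
      have := ch.inj_idx _ _ _ _ _ _ _ _ heq
      omega
    case _ =>
      intro s hs
      rw [hS1] at hs
      obtain ⟨k, -, rfl⟩ := List.mem_map.mp hs
      obtain ⟨y, hty, hylab⟩ := matchFwd (Y₁ k) _ _ (labY₁ k)
      rcases cls y with ⟨k', rfl⟩ | ⟨k', rfl⟩ | ⟨k', rfl⟩ | ⟨k', i', rfl⟩ |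
        ⟨k', rfl⟩ | ⟨k', i', rfl⟩ | ⟨k', rfl⟩ | ⟨k', rfl⟩
      · exact absurd ((labX₁ k').symm.trans hylab) (by simp)
      · exact absurd ((labY₁ k').symm.trans hylab) (by simp)
      · exact absurd ((labR₂ k').symm.trans hylab) (by simp)
      · exact absurd ((labS₂ k' i').symm.trans hylab) (by simp)
      · refine ⟨(R₃ k', some (Sum.inl (u₃.get k'))), ?_, hty⟩
        rw [hR1]
        exact List.mem_map.mpr ⟨k', List.mem_finRange _, rfl⟩
      · exact absurd ((labS₃ k' i').symm.trans hylab) (by simp)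
      · exact absurd ((labE₄ k').symm.trans hylab) (by simp)
      · exact absurd ((labF₄ k').symm.trans hylab) (by simp)
    case _ =>
      intro r hr
      rw [hR1] at hr
      obtain ⟨k, -, rfl⟩ := List.mem_map.mp hr
      obtain ⟨x, htx, hxlab⟩ := matchBwd (R₃ k) _ _ (labR₃ k)
      rcases cls x with ⟨k', rfl⟩ | ⟨k', rfl⟩ | ⟨k', rfl⟩ | ⟨k', i', rfl⟩ |
        ⟨k', rfl⟩ | ⟨k', i', rfl⟩ | ⟨k', rfl⟩ | ⟨k', rfl⟩
      · exact absurd ((labX₁ k').symm.trans hxlab) (by simp)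
      · refine ⟨(Y₁ k', some (Sum.inl (u₁.get k'))), ?_, htx⟩
        rw [hS1]
        exact List.mem_map.mpr ⟨k', List.mem_finRange _, rfl⟩
      · exact absurd ((labR₂ k').symm.trans hxlab) (by simp)
      · exact absurd ((labS₂ k' i').symm.trans hxlab) (by simp)
      · exact absurd ((labR₃ k').symm.trans hxlab) (by simp)
      · exact absurd ((labS₃ k' i').symm.trans hxlab) (by simp)
      · exact absurd ((labE₄ k').symm.trans hxlab) (by simp)
      · exact absurd ((labF₄ k').symm.trans hxlab) (by simp)
    case _ =>
      intro s hs r hr htr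
      rw [hS1] at hs; rw [hR1] at hr
      obtain ⟨k, -, rfl⟩ := List.mem_map.mp hs
      obtain ⟨k', -, rfl⟩ := List.mem_map.mp hr
      have hm := ch.tri_msg (k : ℕ) (L₁.get ⟨k, hlt₁ k⟩) (hidx₁ k) (f₁ k)
        (L₁.length + L₂.length + (k' : ℕ)) (L₃.get ⟨k', hlt₃ k'⟩) (hidx₃ k') (ev₃ k' 0)
        (by have := k.isLt; omega) htr
      rw [hmsgf₁ k, hmz₃ k'] at hm
      exact hm
  -- channel q → p : (u₂.map f).flatten = v
  have key3 : (u₂.map f).flatten = v := by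
    set S1 : List (M.E × Option (A ⊕ B)) :=
      ((List.finRange u₂.length).map (fun k =>
        (List.finRange (f (u₂.get k)).length).map (fun i =>
          (S₂ k i, some (Sum.inr ((f (u₂.get k)).get i)))))).flatten with hS1
    set R1 : List (M.E × Option (A ⊕ B)) :=
      (List.finRange v.length).map
        (fun k => (E₄ k, some (Sum.inr (v.get k)))) with hR1
    have hw := channel_words M PCPProc.q PCPProc.p S1 R1 ?_ ?_ ?_ ?_ ?_ ?_
    case _ =>
      have e1 : S1.map Prod.snd
          = ((u₂.map f).flatten).map (fun b => (some (Sum.inr b) : Option (A ⊕ B))) := by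
        rw [hS1, List.map_flatten, List.map_map]
        conv_rhs => rw [← List.map_get_finRange u₂, List.map_map, List.map_flatten,
          List.map_map]
        congr 1
        refine List.map_congr_left ?_
        intro k _
        simp only [Function.comp_apply]
        rw [List.map_map]
        conv_rhs => rw [← List.map_get_finRange (f (u₂.get k)), List.map_map]
        rfl
      have e2 : R1.map Prod.snd = v.map (fun b => (some (Sum.inr b) : Option (A ⊕ B))) := by
        rw [hR1, List.map_map]
        conv_rhs => rw [← List.map_get_finRange v, List.map_map]
        rfl
      rw [e1, e2] at hw
      have hinj : Function.Injective (fun b : B => (some (Sum.inr b) : Option (A ⊕ B))) := by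
        intro a b h; simpa using h
      exact List.map_injective_iff.mpr hinj hw
    case _ =>
      intro s hs
      rw [hS1] at hs
      obtain ⟨l, hl, hsl⟩ := List.mem_flatten.mp hs
      obtain ⟨k, -, rfl⟩ := List.mem_map.mp hl
      obtain ⟨i, -, rfl⟩ := List.mem_map.mp hsl
      exact labS₂ k i
    case _ =>
      rw [hS1, List.map_flatten, List.map_map, List.pairwise_flatten]
      constructor
      · intro l hl
        obtain ⟨k, -, rfl⟩ := List.mem_map.mp hl
        simp only [Function.comp_apply]
        rw [List.map_map, List.pairwise_map]
        refine (List.pairwise_lt_finRange _).imp ?_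
        intro i i' hii
        constructor
        · refine (ch.le_same _ _ (hidx₂ k) _ _ ?_).mpr ?_
          · rw [(hsucc₂ k i).1, (hsucc₂ k i').1]
          · refine (hord₂ k i.succ i'.succ).mpr ?_
            rw [Fin.le_def]
            simp only [Fin.val_succ]
            have := Fin.lt_def.mp hii
            omega
        · intro heq
          have h1 := ch.inj_ev _ _ (hidx₂ k) _ _ heq
          have h2 := (ev₂ k).injective h1
          have h3 := Fin.succ_injective _ h2
          exact absurd hii (by rw [h3]; exact lt_irrefl _)
      · rw [List.pairwise_map]
        refine (List.pairwise_lt_finRange _).imp ?_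
        intro k k' hkk x hx y hy
        simp only [Function.comp_apply] at hx hy
        rw [List.map_map] at hx hy
        obtain ⟨i, -, rfl⟩ := List.mem_map.mp hx
        obtain ⟨i', -, rfl⟩ := List.mem_map.mp hy
        have hklt : (k : ℕ) < (k' : ℕ) := hkk
        constructor
        · exact ch.le_cross _ _ _ _ _ _ _ _ (by omega)
            (by rw [(hsucc₂ k i).1, (hsucc₂ k' i').1])
        · intro heq
          have := ch.inj_idx _ _ _ _ _ _ _ _ heq
          omega
    case _ =>
      rw [hR1, List.map_map, List.pairwise_map]
      refine (List.pairwise_lt_finRange _).imp ?_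
      intro k k' hkk
      have hklt : (k : ℕ) < (k' : ℕ) := hkk
      refine ⟨ch.le_cross _ _ _ _ _ _ _ _ (by omega) (by rw [hlabe₄ k, hlabe₄ k']), ?_⟩
      intro heq
      have := ch.inj_idx _ _ _ _ _ _ _ _ heq
      omega
    case _ =>
      intro s hs
      rw [hS1] at hs
      obtain ⟨l, hl, hsl⟩ := List.mem_flatten.mp hs
      obtain ⟨k, -, rfl⟩ := List.mem_map.mp hl
      obtain ⟨i, -, rfl⟩ := List.mem_map.mp hsl
      obtain ⟨y, hty, hylab⟩ := matchFwd (S₂ k i) _ _ (labS₂ k i)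
      rcases cls y with ⟨k', rfl⟩ | ⟨k', rfl⟩ | ⟨k', rfl⟩ | ⟨k', i', rfl⟩ |
        ⟨k', rfl⟩ | ⟨k', i', rfl⟩ | ⟨k', rfl⟩ | ⟨k', rfl⟩
      · exact absurd ((labX₁ k').symm.trans hylab) (by simp)
      · exact absurd ((labY₁ k').symm.trans hylab) (by simp)
      · exact absurd ((labR₂ k').symm.trans hylab) (by simp)
      · exact absurd ((labS₂ k' i').symm.trans hylab) (by simp)
      · exact absurd ((labR₃ k').symm.trans hylab) (by simp)
      · exact absurd ((labS₃ k' i').symm.trans hylab) (by simp)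
      · refine ⟨(E₄ k', some (Sum.inr (v.get k'))), ?_, hty⟩
        rw [hR1]
        exact List.mem_map.mpr ⟨k', List.mem_finRange _, rfl⟩
      · exact absurd ((labF₄ k').symm.trans hylab) (by simp)
    case _ =>
      intro r hr
      rw [hR1] at hr
      obtain ⟨k, -, rfl⟩ := List.mem_map.mp hr
      obtain ⟨x, htx, hxlab⟩ := matchBwd (E₄ k) _ _ (labE₄ k)
      rcases cls x with ⟨k', rfl⟩ | ⟨k', rfl⟩ | ⟨k', rfl⟩ | ⟨k', i', rfl⟩ |
        ⟨k', rfl⟩ | ⟨k', i', rfl⟩ | ⟨k', rfl⟩ | ⟨k', rfl⟩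
      · exact absurd ((labX₁ k').symm.trans hxlab) (by simp)
      · exact absurd ((labY₁ k').symm.trans hxlab) (by simp)
      · exact absurd ((labR₂ k').symm.trans hxlab) (by simp)
      · refine ⟨(S₂ k' i', some (Sum.inr ((f (u₂.get k')).get i'))), ?_, htx⟩
        rw [hS1]
        exact List.mem_flatten.mpr ⟨_, List.mem_map.mpr ⟨k', List.mem_finRange _, rfl⟩,
          List.mem_map.mpr ⟨i', List.mem_finRange _, rfl⟩⟩
      · exact absurd ((labR₃ k').symm.trans hxlab) (by simp)
      · exact absurd ((labS₃ k' i').symm.trans hxlab) (by simp)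
      · exact absurd ((labE₄ k').symm.trans hxlab) (by simp)
      · exact absurd ((labF₄ k').symm.trans hxlab) (by simp)
    case _ =>
      intro s hs r hr htr
      rw [hS1] at hs; rw [hR1] at hr
      obtain ⟨l, hl, hsl⟩ := List.mem_flatten.mp hs
      obtain ⟨k, -, rfl⟩ := List.mem_map.mp hl
      obtain ⟨i, -, rfl⟩ := List.mem_map.mp hsl
      obtain ⟨k', -, rfl⟩ := List.mem_map.mp hr
      have hm := ch.tri_msg (L₁.length + (k : ℕ)) (L₂.get ⟨k, hlt₂ k⟩) (hidx₂ k)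
        (ev₂ k i.succ)
        (L₁.length + L₂.length + L₃.length + (k' : ℕ)) (L₄.get ⟨k', hlt₄ k'⟩) (hidx₄ k')
        (e₄ k') (by have := k.isLt; omega) htr
      rw [(hsucc₂ k i).2, hmsge₄ k'] at hm
      exact hm
  -- channel r → p : (u₃.map g).flatten = v
  have key4 : (u₃.map g).flatten = v := by
    set S1 : List (M.E × Option (A ⊕ B)) :=
      ((List.finRange u₃.length).map (fun k =>
        (List.finRange (g (u₃.get k)).length).map (fun i =>
          (S₃ k i, some (Sum.inr ((g (u₃.get k)).get i)))))).flatten with hS1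
    set R1 : List (M.E × Option (A ⊕ B)) :=
      (List.finRange v.length).map
        (fun k => (F₄ k, some (Sum.inr (v.get k)))) with hR1
    have hw := channel_words M PCPProc.r PCPProc.p S1 R1 ?_ ?_ ?_ ?_ ?_ ?_
    case _ =>
      have e1 : S1.map Prod.snd
          = ((u₃.map g).flatten).map (fun b => (some (Sum.inr b) : Option (A ⊕ B))) := by
        rw [hS1, List.map_flatten, List.map_map]
        conv_rhs => rw [← List.map_get_finRange u₃, List.map_map, List.map_flatten,
          List.map_map]
        congr 1
        refine List.map_congr_left ?_
        intro k _
        simp only [Function.comp_apply]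
        rw [List.map_map]
        conv_rhs => rw [← List.map_get_finRange (g (u₃.get k)), List.map_map]
        rfl
      have e2 : R1.map Prod.snd = v.map (fun b => (some (Sum.inr b) : Option (A ⊕ B))) := by
        rw [hR1, List.map_map]
        conv_rhs => rw [← List.map_get_finRange v, List.map_map]
        rfl
      rw [e1, e2] at hw
      have hinj : Function.Injective (fun b : B => (some (Sum.inr b) : Option (A ⊕ B))) := by
        intro a b h; simpa using h
      exact List.map_injective_iff.mpr hinj hw
    case _ =>
      intro s hs
      rw [hS1] at hs
      obtain ⟨l, hl, hsl⟩ := List.mem_flatten.mp hs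
      obtain ⟨k, -, rfl⟩ := List.mem_map.mp hl
      obtain ⟨i, -, rfl⟩ := List.mem_map.mp hsl
      exact labS₃ k i
    case _ =>
      rw [hS1, List.map_flatten, List.map_map, List.pairwise_flatten]
      constructor
      · intro l hl
        obtain ⟨k, -, rfl⟩ := List.mem_map.mp hl
        simp only [Function.comp_apply]
        rw [List.map_map, List.pairwise_map]
        refine (List.pairwise_lt_finRange _).imp ?_
        intro i i' hii
        constructor
        · refine (ch.le_same _ _ (hidx₃ k) _ _ ?_).mpr ?_
          · rw [(hsucc₃ k i).1, (hsucc₃ k i').1]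
          · refine (hord₃ k i.succ i'.succ).mpr ?_
            rw [Fin.le_def]
            simp only [Fin.val_succ]
            have := Fin.lt_def.mp hii
            omega
        · intro heq
          have h1 := ch.inj_ev _ _ (hidx₃ k) _ _ heq
          have h2 := (ev₃ k).injective h1
          have h3 := Fin.succ_injective _ h2
          exact absurd hii (by rw [h3]; exact lt_irrefl _)
      · rw [List.pairwise_map]
        refine (List.pairwise_lt_finRange _).imp ?_
        intro k k' hkk x hx y hy
        simp only [Function.comp_apply] at hx hy
        rw [List.map_map] at hx hy
        obtain ⟨i, -, rfl⟩ := List.mem_map.mp hx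
        obtain ⟨i', -, rfl⟩ := List.mem_map.mp hy
        have hklt : (k : ℕ) < (k' : ℕ) := hkk
        constructor
        · exact ch.le_cross _ _ _ _ _ _ _ _ (by omega)
            (by rw [(hsucc₃ k i).1, (hsucc₃ k' i').1])
        · intro heq
          have := ch.inj_idx _ _ _ _ _ _ _ _ heq
          omega
    case _ =>
      rw [hR1, List.map_map, List.pairwise_map]
      refine (List.pairwise_lt_finRange _).imp ?_
      intro k k' hkk
      have hklt : (k : ℕ) < (k' : ℕ) := hkk
      refine ⟨ch.le_cross _ _ _ _ _ _ _ _ (by omega) (by rw [hlabf₄ k, hlabf₄ k']), ?_⟩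
      intro heq
      have := ch.inj_idx _ _ _ _ _ _ _ _ heq
      omega
    case _ =>
      intro s hs
      rw [hS1] at hs
      obtain ⟨l, hl, hsl⟩ := List.mem_flatten.mp hs
      obtain ⟨k, -, rfl⟩ := List.mem_map.mp hl
      obtain ⟨i, -, rfl⟩ := List.mem_map.mp hsl
      obtain ⟨y, hty, hylab⟩ := matchFwd (S₃ k i) _ _ (labS₃ k i)
      rcases cls y with ⟨k', rfl⟩ | ⟨k', rfl⟩ | ⟨k', rfl⟩ | ⟨k', i', rfl⟩ |
        ⟨k', rfl⟩ | ⟨k', i', rfl⟩ | ⟨k', rfl⟩ | ⟨k', rfl⟩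
      · exact absurd ((labX₁ k').symm.trans hylab) (by simp)
      · exact absurd ((labY₁ k').symm.trans hylab) (by simp)
      · exact absurd ((labR₂ k').symm.trans hylab) (by simp)
      · exact absurd ((labS₂ k' i').symm.trans hylab) (by simp)
      · exact absurd ((labR₃ k').symm.trans hylab) (by simp)
      · exact absurd ((labS₃ k' i').symm.trans hylab) (by simp)
      · exact absurd ((labE₄ k').symm.trans hylab) (by simp)
      · refine ⟨(F₄ k', some (Sum.inr (v.get k'))), ?_, hty⟩
        rw [hR1]
        exact List.mem_map.mpr ⟨k', List.mem_finRange _, rfl⟩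
    case _ =>
      intro r hr
      rw [hR1] at hr
      obtain ⟨k, -, rfl⟩ := List.mem_map.mp hr
      obtain ⟨x, htx, hxlab⟩ := matchBwd (F₄ k) _ _ (labF₄ k)
      rcases cls x with ⟨k', rfl⟩ | ⟨k', rfl⟩ | ⟨k', rfl⟩ | ⟨k', i', rfl⟩ |
        ⟨k', rfl⟩ | ⟨k', i', rfl⟩ | ⟨k', rfl⟩ | ⟨k', rfl⟩
      · exact absurd ((labX₁ k').symm.trans hxlab) (by simp)
      · exact absurd ((labY₁ k').symm.trans hxlab) (by simp)
      · exact absurd ((labR₂ k').symm.trans hxlab) (by simp)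
      · exact absurd ((labS₂ k' i').symm.trans hxlab) (by simp)
      · exact absurd ((labR₃ k').symm.trans hxlab) (by simp)
      · refine ⟨(S₃ k' i', some (Sum.inr ((g (u₃.get k')).get i'))), ?_, htx⟩
        rw [hS1]
        exact List.mem_flatten.mpr ⟨_, List.mem_map.mpr ⟨k', List.mem_finRange _, rfl⟩,
          List.mem_map.mpr ⟨i', List.mem_finRange _, rfl⟩⟩
      · exact absurd ((labE₄ k').symm.trans hxlab) (by simp)
      · exact absurd ((labF₄ k').symm.trans hxlab) (by simp)
    case _ =>
      intro s hs r hr htr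
      rw [hS1] at hs; rw [hR1] at hr
      obtain ⟨l, hl, hsl⟩ := List.mem_flatten.mp hs
      obtain ⟨k, -, rfl⟩ := List.mem_map.mp hl
      obtain ⟨i, -, rfl⟩ := List.mem_map.mp hsl
      obtain ⟨k', -, rfl⟩ := List.mem_map.mp hr
      have hm := ch.tri_msg (L₁.length + L₂.length + (k : ℕ)) (L₃.get ⟨k, hlt₃ k⟩) (hidx₃ k)
        (ev₃ k i.succ)
        (L₁.length + L₂.length + L₃.length + (k' : ℕ)) (L₄.get ⟨k', hlt₄ k'⟩) (hidx₄ k')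
        (f₄ k') (by have := k.isLt; omega) htr
      rw [(hsucc₃ k i).2, hmsgf₄ k'] at hm
      exact hm
  refine ⟨key1, key2, ?_, ?_⟩
  · rw [← key3, key1]
  · rw [← key4, key2]


end HMSCPaper
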